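/- Lipschitz control of a C¹_H map whose differential is near the identity: let f : ℍₙ → ℝ^(2n) be of class C¹_H, let c > 0, and let B = B_R(p) ⊆ ℍₙ be a Korányi ball such that ‖D_H f_q − id‖_op < c for all q ∈ B_{5R}(p). Then for all x, y ∈ B, |(f(x) − π(x)) − (f(y) − π(y))| ≤ 3 c d(x,y). -/

import Mathlib

open MeasureTheory Set Filter Topology
open scoped ENNReal

noncomputable section

/-- Euclidean space `ℝ^(2n)`, the horizontal layer. -/
abbrev E (n : ℕ) : Type := EuclideanSpace ℝ (Fin (2 * n))

/-- The Heisenberg group `ℍₙ` as a set: `ℝ^(2n) × ℝ`. -/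
abbrev Hpt (n : ℕ) : Type := E n × ℝ

/-- The standard symplectic form on `ℝ^(2n)` with coordinates `(x₁,y₁,…,xₙ,yₙ)`. -/
def omegaF (n : ℕ) (u v : E n) : ℝ :=
  ∑ i : Fin n,
    (u ⟨2 * i.1, by have := i.isLt; omega⟩ * v ⟨2 * i.1 + 1, by have := i.isLt; omega⟩
     - v ⟨2 * i.1, by have := i.isLt; omega⟩ * u ⟨2 * i.1 + 1, by have := i.isLt; omega⟩)

/-- The Heisenberg group law. -/
def hmul (n : ℕ) (a b : Hpt n) : Hpt n :=
  (a.1 + b.1, a.2 + b.2 + (1 / 2) * omegaF n a.1 b.1)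

/-- The Heisenberg group inverse. -/
def hinv (n : ℕ) (a : Hpt n) : Hpt n := (-a.1, -a.2)

/-- The Korányi norm. -/
def kor (n : ℕ) (q : Hpt n) : ℝ := (‖q.1‖ ^ 4 + 16 * q.2 ^ 2) ^ ((1 : ℝ) / 4)

/-- The Korányi (left-invariant, homogeneous) distance. -/
def dK (n : ℕ) (p q : Hpt n) : ℝ := kor n (hmul n (hinv n p) q)

/-- `f` is Pansu differentiable at `x` with horizontal differential `L`. -/
def PansuDiffAt (n : ℕ) (f : Hpt n → E n) (x : Hpt n) (L : E n →L[ℝ] E n) : Prop :=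
  ∀ ε > (0 : ℝ), ∃ δ > (0 : ℝ), ∀ y : Hpt n, dK n x y < δ →
    ‖f y - f x - L ((hmul n (hinv n x) y).1)‖ ≤ ε * dK n x y

/-- `f` is of class `C¹_H` with horizontal differential `D`: it is Pansu differentiable
everywhere and `x ↦ D_H f_x` is continuous in the operator norm (w.r.t. the Korányi metric). -/
def C1H (n : ℕ) (f : Hpt n → E n) (D : Hpt n → (E n →L[ℝ] E n)) : Prop :=
  (∀ x, PansuDiffAt n f x (D x)) ∧
  (∀ x, ∀ ε > (0 : ℝ), ∃ δ > (0 : ℝ), ∀ y : Hpt n, dK n x y < δ → ‖D y - D x‖ < ε)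

/-!
Write `x⁻¹ · y = (v, τ)` and choose `u₁, u₂` of length `√|τ|` with `ω(u₁, u₂) = τ`. Then the
horizontal path `x → x·v → ·u₁ → ·u₂ → ·(-u₁) → ·(-u₂)` ends at `y`, has length
`|v| + 4√|τ| ≤ 3 d(x,y)` (both `|v|` and `2√|τ|` are at most `d(x,y)`), and stays inside
`B_{5R}(p)`. Along a horizontal line `t ↦ s·(tV, 0)` the map `f − π` has derivative
`(D_H f − id) V`, of norm at most `c|V|`, so the mean value inequality on the five segments gives
the bound.
-/

section

variable {n : ℕ}

lemma omegaF_add_left (u v w : E n) : omegaF n (u + v) w = omegaF n u w + omegaF n v w := by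
  simp only [omegaF, ← Finset.sum_add_distrib, PiLp.add_apply]; congr 1; ext; ring

lemma omegaF_add_right (u v w : E n) : omegaF n u (v + w) = omegaF n u v + omegaF n u w := by
  simp only [omegaF, ← Finset.sum_add_distrib, PiLp.add_apply]; congr 1; ext; ring

lemma omegaF_smul_left (r : ℝ) (u v : E n) : omegaF n (r • u) v = r * omegaF n u v := by
  simp only [omegaF, Finset.mul_sum, PiLp.smul_apply, smul_eq_mul]; congr 1; ext; ring

lemma omegaF_smul_right (r : ℝ) (u v : E n) : omegaF n u (r • v) = r * omegaF n u v := by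
  simp only [omegaF, Finset.mul_sum, PiLp.smul_apply, smul_eq_mul]; congr 1; ext; ring

lemma omegaF_neg_left (u v : E n) : omegaF n (-u) v = -omegaF n u v := by
  simpa using omegaF_smul_left (-1) u v

lemma omegaF_neg_right (u v : E n) : omegaF n u (-v) = -omegaF n u v := by
  simpa using omegaF_smul_right (-1) u v

lemma omegaF_comm (u v : E n) : omegaF n u v = -omegaF n v u := by
  simp only [omegaF, ← Finset.sum_neg_distrib]; congr 1; ext; ring

lemma omegaF_self (u : E n) : omegaF n u u = 0 := by
  simp [omegaF]

lemma sum_fin_two_mul {M : Type*} [AddCommMonoid M] (g : Fin (2 * n) → M) :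
    ∑ i, g i = ∑ j : Fin n,
      (g ⟨2 * j.1, by have := j.isLt; omega⟩ + g ⟨2 * j.1 + 1, by have := j.isLt; omega⟩) := by
  rw [← (finProdFinEquiv.trans (finCongr (mul_comm n 2))).sum_comp, Fintype.sum_prod_type]
  refine Finset.sum_congr rfl fun j _ => ?_
  rw [Fin.sum_univ_two]
  congr 1 <;> congr 1 <;> ext <;> simp [finProdFinEquiv, add_comm]

def toComplex (u : E n) : EuclideanSpace ℂ (Fin n) :=
  WithLp.toLp 2 fun j =>
    ⟨u ⟨2 * j.1, by have := j.isLt; omega⟩, u ⟨2 * j.1 + 1, by have := j.isLt; omega⟩⟩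

lemma inner_toComplex (u v : E n) :
    inner ℂ (toComplex u) (toComplex v) = ⟨inner ℝ u v, omegaF n u v⟩ := by
  apply Complex.ext
  · rw [PiLp.inner_apply, PiLp.inner_apply, sum_fin_two_mul, Complex.re_sum]
    refine Finset.sum_congr rfl fun j _ => ?_
    simp [toComplex, Complex.mul_re]
  · rw [PiLp.inner_apply, Complex.im_sum]
    refine Finset.sum_congr rfl fun j _ => ?_
    simp [toComplex, Complex.mul_im]
    ring

lemma norm_toComplex (u : E n) : ‖toComplex u‖ = ‖u‖ := by
  have h := congrArg Complex.re (inner_toComplex u u)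
  rw [← RCLike.re_eq_complex_re, inner_self_eq_norm_sq, real_inner_self_eq_norm_sq] at h
  exact (pow_left_inj₀ (norm_nonneg _) (norm_nonneg _) two_ne_zero).mp h

lemma norm_inner_omegaF_le (u v : E n) :
    ‖(⟨inner ℝ u v, omegaF n u v⟩ : ℂ)‖ ≤ ‖u‖ * ‖v‖ := by
  simpa only [inner_toComplex, norm_toComplex] using
    norm_inner_le_norm (𝕜 := ℂ) (toComplex u) (toComplex v)

lemma hmul_assoc (a b c : Hpt n) : hmul n (hmul n a b) c = hmul n a (hmul n b c) := by
  ext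
  · simp [hmul, add_assoc]
  · simp only [hmul, omegaF_add_left, omegaF_add_right]; ring

lemma hinv_hmul_cancel_left (x w : Hpt n) : hmul n (hinv n x) (hmul n x w) = w := by
  ext
  · simp [hmul, hinv]
  · simp only [hmul, hinv, omegaF_neg_left, omegaF_add_right, omegaF_self]; ring

lemma hmul_hinv_cancel_left (x w : Hpt n) : hmul n x (hmul n (hinv n x) w) = w := by
  simpa [hinv] using hinv_hmul_cancel_left (hinv n x) w

lemma hinv_hmul_hinv (p q : Hpt n) : hinv n (hmul n (hinv n p) q) = hmul n (hinv n q) p := by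
  ext
  · simp [hmul, hinv, add_comm]
  · simp only [hmul, hinv, omegaF_neg_left, omegaF_comm q.1 p.1]; ring

/-- Cygan's complex form of the Korányi gauge, `kor q ^ 2 = ‖korComplex q‖`: it is additive under
`hmul` up to twice the Hermitian product of the horizontal parts, so the triangle inequality for
`kor` reduces to the one in `ℂ` and Cauchy–Schwarz in `ℂⁿ`. -/
def korComplex (q : Hpt n) : ℂ := ⟨‖q.1‖ ^ 2, 4 * q.2⟩

lemma kor_nonneg (q : Hpt n) : 0 ≤ kor n q := by unfold kor; positivity

lemma kor_sq (q : Hpt n) : kor n q ^ 2 = ‖korComplex q‖ := by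
  rw [kor, ← Real.rpow_natCast, ← Real.rpow_mul (by positivity), Complex.norm_def,
    Complex.normSq_mk, Real.sqrt_eq_rpow, korComplex]
  norm_num; ring_nf

lemma kor_horizontal (w : E n) : kor n (w, 0) = ‖w‖ := by
  rw [← pow_left_inj₀ (kor_nonneg _) (norm_nonneg w) two_ne_zero, kor_sq, korComplex]
  simp [Complex.norm_def, Complex.normSq_mk, ← sq]

lemma kor_hinv (q : Hpt n) : kor n (hinv n q) = kor n q := by simp [kor, hinv]

lemma norm_fst_le_kor (q : Hpt n) : ‖q.1‖ ≤ kor n q := by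
  rw [← pow_le_pow_iff_left₀ (norm_nonneg _) (kor_nonneg q) two_ne_zero, kor_sq]
  simpa [korComplex] using Complex.abs_re_le_norm (korComplex q)

lemma two_mul_sqrt_abs_snd_le_kor (q : Hpt n) : 2 * √|q.2| ≤ kor n q := by
  rw [← pow_le_pow_iff_left₀ (by positivity) (kor_nonneg q) two_ne_zero, kor_sq, mul_pow,
    Real.sq_sqrt (abs_nonneg _)]
  norm_num
  simpa [korComplex, abs_mul] using Complex.abs_im_le_norm (korComplex q)

lemma korComplex_hmul (a b : Hpt n) :
    korComplex (hmul n a b) =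
      korComplex a + korComplex b + 2 * ⟨inner ℝ a.1 b.1, omegaF n a.1 b.1⟩ := by
  apply Complex.ext
  · simp [korComplex, hmul, norm_add_sq_real]; ring
  · simp [korComplex, hmul]; ring

lemma kor_hmul_le (a b : Hpt n) : kor n (hmul n a b) ≤ kor n a + kor n b := by
  rw [← pow_le_pow_iff_left₀ (kor_nonneg _) (add_nonneg (kor_nonneg a) (kor_nonneg b))
    two_ne_zero, kor_sq, korComplex_hmul]
  have hcs := norm_inner_omegaF_le a.1 b.1
  have ha := norm_fst_le_kor a
  have hb := norm_fst_le_kor b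
  calc _ ≤ ‖korComplex a‖ + ‖korComplex b‖
          + 2 * ‖(⟨inner ℝ a.1 b.1, omegaF n a.1 b.1⟩ : ℂ)‖ := by
        refine (norm_add_le _ _).trans ?_
        rw [norm_mul, Complex.norm_two]
        gcongr
        exact norm_add_le _ _
    _ ≤ (kor n a + kor n b) ^ 2 := by
        rw [← kor_sq, ← kor_sq]
        nlinarith [norm_nonneg a.1, norm_nonneg b.1, kor_nonneg a, kor_nonneg b]

lemma dK_nonneg (p q : Hpt n) : 0 ≤ dK n p q := kor_nonneg _

lemma dK_comm (p q : Hpt n) : dK n p q = dK n q p := by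
  rw [dK, dK, ← hinv_hmul_hinv, kor_hinv]

lemma dK_triangle (p q r : Hpt n) : dK n p r ≤ dK n p q + dK n q r := by
  have h : hmul n (hinv n p) r = hmul n (hmul n (hinv n p) q) (hmul n (hinv n q) r) := by
    rw [hmul_assoc, hmul_hinv_cancel_left]
  rw [dK, h]
  exact kor_hmul_le _ _

lemma dK_hmul_right (x w : Hpt n) : dK n x (hmul n x w) = kor n w := by
  rw [dK, hinv_hmul_cancel_left]

def horizSeg (s : Hpt n) (V : E n) (t : ℝ) : Hpt n := hmul n s (t • V, 0)

lemma horizSeg_zero (s : Hpt n) (V : E n) : horizSeg s V 0 = s := by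
  ext <;> simp [horizSeg, hmul, omegaF]

lemma hinv_horizSeg_hmul_horizSeg (s : Hpt n) (V : E n) (a b : ℝ) :
    hmul n (hinv n (horizSeg s V a)) (horizSeg s V b) = ((b - a) • V, 0) := by
  refine Prod.ext ?_ ?_
  · simp only [horizSeg, hmul, hinv]; module
  · simp only [horizSeg, hmul, hinv, omegaF_neg_left, omegaF_add_left, omegaF_add_right,
      omegaF_smul_left, omegaF_smul_right, omegaF_self, omegaF_comm V s.1]
    ring

lemma dK_horizSeg (s : Hpt n) (V : E n) (a b : ℝ) :
    dK n (horizSeg s V a) (horizSeg s V b) = |b - a| * ‖V‖ := by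
  rw [dK, hinv_horizSeg_hmul_horizSeg, kor_horizontal, norm_smul, Real.norm_eq_abs]

lemma PansuDiffAt.hasDerivAt_comp_horizSeg {f : Hpt n → E n} {L : E n →L[ℝ] E n}
    {s : Hpt n} {V : E n} {t₀ : ℝ} (hf : PansuDiffAt n f (horizSeg s V t₀) L) :
    HasDerivAt (fun t => f (horizSeg s V t)) (L V) t₀ := by
  rw [hasDerivAt_iff_isLittleO_nhds_zero, Asymptotics.isLittleO_iff]
  intro C hC
  obtain ⟨δ, hδ, hL⟩ := hf (C / (‖V‖ + 1)) (by positivity)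
  have hnear : ∀ᶠ h in 𝓝 (0 : ℝ), |h| * ‖V‖ < δ := by
    have hcont : Continuous fun h : ℝ => |h| * ‖V‖ := by fun_prop
    exact (hcont.tendsto' 0 0 (by simp)).eventually (gt_mem_nhds hδ)
  filter_upwards [hnear] with h hh
  have hd : dK n (horizSeg s V t₀) (horizSeg s V (t₀ + h)) = |h| * ‖V‖ := by
    rw [dK_horizSeg, add_sub_cancel_left]
  have hbound := hL _ (hd ▸ hh)
  rw [hinv_horizSeg_hmul_horizSeg, add_sub_cancel_left, map_smul, hd] at hbound
  calc _ ≤ C / (‖V‖ + 1) * (|h| * ‖V‖) := hbound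
    _ ≤ C * ‖h‖ := by
        rw [Real.norm_eq_abs, div_mul_eq_mul_div, div_le_iff₀ (by positivity)]
        nlinarith [abs_nonneg h, norm_nonneg V]

lemma norm_sub_horizSeg_le {f : Hpt n → E n} {D : Hpt n → (E n →L[ℝ] E n)}
    (hP : ∀ x, PansuDiffAt n f x (D x)) {s : Hpt n} {V : E n} {c : ℝ}
    (hD : ∀ t ∈ Ico (0 : ℝ) 1, ‖D (horizSeg s V t) - ContinuousLinearMap.id ℝ (E n)‖ ≤ c) :
    ‖(f s - s.1) - (f (horizSeg s V 1) - (horizSeg s V 1).1)‖ ≤ c * ‖V‖ := by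
  have hderiv (t : ℝ) : HasDerivAt (fun t => f (horizSeg s V t) - (horizSeg s V t).1)
      ((D (horizSeg s V t) - ContinuousLinearMap.id ℝ (E n)) V) t := by
    have hV : HasDerivAt (fun t => (horizSeg s V t).1) V t :=
      (((hasDerivAt_id t).smul_const V).const_add s.1).congr_deriv (one_smul ℝ V)
    exact (hP (horizSeg s V t)).hasDerivAt_comp_horizSeg.sub hV
  have h := norm_image_sub_le_of_norm_deriv_le_segment_01'
    (fun t _ => (hderiv t).hasDerivWithinAt) fun t ht =>
      ((D _ - _).le_opNorm V).trans (mul_le_mul_of_nonneg_right (hD t ht) (norm_nonneg V))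
  rwa [norm_sub_rev, horizSeg_zero] at h

lemma norm_sub_horizSeg_le_of_dK_lt {f : Hpt n → E n} {D : Hpt n → (E n →L[ℝ] E n)}
    (hP : ∀ x, PansuDiffAt n f x (D x)) {p : Hpt n} {r c : ℝ}
    (hD : ∀ q, dK n p q < r → ‖D q - ContinuousLinearMap.id ℝ (E n)‖ < c) {s s' : Hpt n}
    {V : E n} (hs' : horizSeg s V 1 = s') (h : dK n p s + ‖V‖ < r ∨ dK n p s' + ‖V‖ < r) :
    ‖(f s - s.1) - (f s' - s'.1)‖ ≤ c * ‖V‖ := by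
  subst hs'
  refine norm_sub_horizSeg_le hP fun t ht => (hD _ ?_).le
  have h₀ : dK n s (horizSeg s V t) ≤ ‖V‖ := by
    have h := dK_horizSeg s V 0 t
    rw [horizSeg_zero, sub_zero] at h
    rw [h]
    exact mul_le_of_le_one_left (norm_nonneg V) (abs_le.mpr ⟨by linarith [ht.1], ht.2.le⟩)
  have h₁ : dK n (horizSeg s V 1) (horizSeg s V t) ≤ ‖V‖ := by
    rw [dK_horizSeg]
    exact mul_le_of_le_one_left (norm_nonneg V)
      (abs_le.mpr ⟨by linarith [ht.1], by linarith [ht.2]⟩)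
  rcases h with h | h
  · linarith [dK_triangle p s (horizSeg s V t)]
  · linarith [dK_triangle p (horizSeg s V 1) (horizSeg s V t)]

lemma dK_horizSeg_one (s : Hpt n) (V : E n) : dK n s (horizSeg s V 1) = ‖V‖ := by
  rw [horizSeg, dK_hmul_right, one_smul, kor_horizontal]

lemma horizSeg_commutator (x : Hpt n) (v u₁ u₂ : E n) :
    horizSeg (horizSeg (horizSeg (horizSeg (horizSeg x v 1) u₁ 1) u₂ 1) (-u₁) 1) (-u₂) 1 =
      hmul n x (v, omegaF n u₁ u₂) := by
  refine Prod.ext ?_ ?_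
  · simp only [horizSeg, hmul, one_smul]; abel
  · simp only [horizSeg, hmul, one_smul, omegaF_add_left, omegaF_neg_left, omegaF_neg_right,
      omegaF_self, omegaF_comm u₂ u₁]
    ring

lemma exists_omegaF_eq (hn : 1 ≤ n) (τ : ℝ) :
    ∃ u₁ u₂ : E n, ‖u₁‖ = √|τ| ∧ ‖u₂‖ = √|τ| ∧ omegaF n u₁ u₂ = τ := by
  refine ⟨EuclideanSpace.single ⟨0, by omega⟩ √|τ|,
    EuclideanSpace.single ⟨1, by omega⟩ (τ / √|τ|),
    by simp, by simp [abs_of_nonneg (Real.sqrt_nonneg _), Real.div_sqrt], ?_⟩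
  rw [omegaF, Finset.sum_eq_single ⟨0, hn⟩]
  · rcases eq_or_ne τ 0 with rfl | hτ
    · simp
    · simp [Fin.ext_iff, mul_div_cancel₀ _ (Real.sqrt_ne_zero'.mpr (abs_pos.mpr hτ))]
  · intro i _ hi
    have : i.1 ≠ 0 := fun h => hi (Fin.ext h)
    simp [Fin.ext_iff, this]
  · simp

lemma norm_sub_le_of_commutator_path {f : Hpt n → E n} {D : Hpt n → (E n →L[ℝ] E n)}
    (hP : ∀ x, PansuDiffAt n f x (D x)) {c : ℝ} (hc : 0 ≤ c) {p : Hpt n} {R : ℝ}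
    (hD : ∀ q, dK n p q < 5 * R → ‖D q - ContinuousLinearMap.id ℝ (E n)‖ < c)
    {x y : Hpt n} (hx : dK n p x < R) (hy : dK n p y < R) {v u₁ u₂ : E n} {σ : ℝ}
    (hu₁ : ‖u₁‖ = σ) (hu₂ : ‖u₂‖ = σ) (hxy : hmul n x (v, omegaF n u₁ u₂) = y)
    (hv : ‖v‖ ≤ dK n x y) (hσ : 2 * σ ≤ dK n x y) :
    ‖(f x - x.1) - (f y - y.1)‖ ≤ 3 * c * dK n x y := by
  set y₁ := horizSeg x v 1
  set y₂ := horizSeg y₁ u₁ 1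
  set y₃ := horizSeg y₂ u₂ 1
  set y₄ := horizSeg y₃ (-u₁) 1
  have hy₅ : horizSeg y₄ (-u₂) 1 = y := (horizSeg_commutator x v u₁ u₂).trans hxy
  have hR : 0 < R := (dK_nonneg p x).trans_lt hx
  have hσ₀ : 0 ≤ σ := hu₁ ▸ norm_nonneg u₁
  have hxy_lt : dK n x y < 2 * R := by linarith [dK_triangle x p y, dK_comm x p]
  have hpy₁ : dK n p y₁ ≤ dK n p x + ‖v‖ := by linarith [dK_triangle p x y₁, dK_horizSeg_one x v]
  have hpy₂ : dK n p y₂ ≤ dK n p y₁ + σ := by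
    linarith [dK_triangle p y₁ y₂, dK_horizSeg_one y₁ u₁]
  have hpy₄ : dK n p y₄ ≤ dK n p y + σ := by
    have h := dK_horizSeg_one y₄ (-u₂)
    rw [hy₅, norm_neg, hu₂] at h
    linarith [dK_triangle p y y₄, dK_comm y₄ y]
  have e₁ := norm_sub_horizSeg_le_of_dK_lt (f := f) hP hD (rfl : y₁ = y₁) (.inl (by linarith))
  have e₂ := norm_sub_horizSeg_le_of_dK_lt (f := f) hP hD (rfl : y₂ = y₂) (.inl (by linarith))
  have e₃ := norm_sub_horizSeg_le_of_dK_lt (f := f) hP hD (rfl : y₃ = y₃) (.inl (by linarith))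
  have e₄ := norm_sub_horizSeg_le_of_dK_lt (f := f) hP hD (rfl : y₄ = y₄)
    (.inr (by rw [norm_neg]; linarith))
  have e₅ := norm_sub_horizSeg_le_of_dK_lt (f := f) hP hD hy₅
    (.inr (by rw [norm_neg]; linarith))
  rw [norm_neg] at e₄ e₅
  have t₁ := norm_sub_le_norm_sub_add_norm_sub (f x - x.1) (f y₁ - y₁.1) (f y - y.1)
  have t₂ := norm_sub_le_norm_sub_add_norm_sub (f y₁ - y₁.1) (f y₂ - y₂.1) (f y - y.1)
  have t₃ := norm_sub_le_norm_sub_add_norm_sub (f y₂ - y₂.1) (f y₃ - y₃.1) (f y - y.1)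
  have t₄ := norm_sub_le_norm_sub_add_norm_sub (f y₃ - y₃.1) (f y₄ - y₄.1) (f y - y.1)
  have hcv : c * ‖v‖ ≤ c * dK n x y := mul_le_mul_of_nonneg_left hv hc
  have hcσ : c * (2 * σ) ≤ c * dK n x y := mul_le_mul_of_nonneg_left hσ hc
  rw [hu₁] at e₂ e₄
  rw [hu₂] at e₃ e₅
  linarith

end

theorem C1H_near_identity_control_general (n : ℕ) (hn : 1 ≤ n)
    (f : Hpt n → E n) (D : Hpt n → (E n →L[ℝ] E n)) (hfD : C1H n f D)
    (c : ℝ) (hc : 0 < c) (p : Hpt n) (R : ℝ)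
    (hD : ∀ q : Hpt n, dK n p q < 5 * R → ‖D q - ContinuousLinearMap.id ℝ (E n)‖ < c) :
    ∀ x y : Hpt n, dK n p x < R → dK n p y < R →
      ‖(f x - x.1) - (f y - y.1)‖ ≤ 3 * c * dK n x y := by
  intro x y hx hy
  set w := hmul n (hinv n x) y
  obtain ⟨u₁, u₂, hu₁, hu₂, hω⟩ := exists_omegaF_eq hn w.2
  refine norm_sub_le_of_commutator_path hfD.1 hc.le hD hx hy hu₁ hu₂ ?_ (norm_fst_le_kor w)
    (two_mul_sqrt_abs_snd_le_kor w)
  rw [hω]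
  exact hmul_hinv_cancel_left x y

/-- **Lipschitz control of a `C¹_H` map whose differential is near the identity**
(Lemma 2.3).  If `f : ℍₙ → ℝ^(2n)` is `C¹_H` with `‖D_H f_q − id‖ < c` on the ball
`B_{5R}(p)`, then for all `x, y ∈ B_R(p)`,
`|(f(x) − π(x)) − (f(y) − π(y))| ≤ 3 c d(x,y)`. -/
theorem C1H_near_identity_control (n : ℕ) (hn : 1 ≤ n)
    (f : Hpt n → E n) (D : Hpt n → (E n →L[ℝ] E n)) (hfD : C1H n f D)
    (c : ℝ) (hc : 0 < c) (p : Hpt n) (R : ℝ) (hR : 0 < R)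
    (hD : ∀ q : Hpt n, dK n p q < 5 * R → ‖D q - ContinuousLinearMap.id ℝ (E n)‖ < c) :
    ∀ x y : Hpt n, dK n p x < R → dK n p y < R →
      ‖(f x - x.1) - (f y - y.1)‖ ≤ 3 * c * dK n x y :=
  C1H_near_identity_control_general n hn f D hfD c hc p R hD
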